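/- Suppose K = (k_{ij}) ∈ ℝ^{q×q} is symmetric positive semidefinite and X₀ ∈ ℝ^{n×n} is symmetric positive semidefinite. Let F : [0,T] → ℝ^{n×n} be continuously differentiable with F'(t) = L_A(F(t)) + Π(F(t)) on [0,T] and F(0) = X₀, and assume F(t) is positive semidefinite for every t ∈ [0,T]. Then the constants of the two-sided bound can be chosen nonnegative: there exist c_low, c_up ≥ 0 such that for all t ∈ [0,T], exp(At) X₀ exp(Aᵀt) + c_low · ∫₀ᵗ exp(As) Π(I) exp(Aᵀs) ds ≼ F(t) ≼ exp(At) X₀ exp(Aᵀt) + c_up · ∫₀ᵗ exp(As) Π(I) exp(Aᵀs) ds in the Loewner order; in particular F(t) ≽ exp(At) X₀ exp(Aᵀt) for all t ∈ [0,T]. -/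

import Mathlib

open Matrix MeasureTheory

/-- The matrix exponential over `ℝ`. -/
noncomputable def mexp {ι : Type*} [Fintype ι] [DecidableEq ι] (A : Matrix ι ι ℝ) :
    Matrix ι ι ℝ := NormedSpace.exp A

/-- The Lyapunov operator `L_A(X) = A X + X Aᵀ`. -/
def LyapL {n : ℕ} (A X : Matrix (Fin n) (Fin n) ℝ) : Matrix (Fin n) (Fin n) ℝ :=
  A * X + X * Aᵀ

/-- The operator `Π(X) = Σ_{i,j} k_{ij} N_i X N_jᵀ`. -/
def PiOp {n q : ℕ} (K : Matrix (Fin q) (Fin q) ℝ) (N : Fin q → Matrix (Fin n) (Fin n) ℝ)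
    (X : Matrix (Fin n) (Fin n) ℝ) : Matrix (Fin n) (Fin n) ℝ :=
  ∑ i, ∑ j, K i j • (N i * X * (N j)ᵀ)

/-- Entrywise interval integral of a matrix-valued function. -/
noncomputable def mInt {a b : ℕ} (s t : ℝ) (F : ℝ → Matrix (Fin a) (Fin b) ℝ) :
    Matrix (Fin a) (Fin b) ℝ :=
  Matrix.of fun i j => ∫ u in s..t, F u i j

/-!
Fix `t` and `y`, put `w(s) = exp((t - s)Aᵀ) y` and `g(s) = w(s)ᵀ F(s) w(s)`. Transporting by the
flow of `A` cancels the Lyapunov part of the equation: `g'(s) = w(s)ᵀ Π(F(s)) w(s)`. Factoring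
`K = CᵀC` writes `Π(X) = Σₖ Mₖ X Mₖᵀ` with `Mₖ = Σᵢ Cₖᵢ Nᵢ`, so `Π` preserves positive
semidefiniteness. Hence `g' ≥ 0`, which is the lower bound with `c_low = 0`. For the upper bound,
`F` is continuous on the compact `[0, T]`, so `F(s) ≼ c I` for some `c ≥ 0`; then
`g'(s) ≤ c · w(s)ᵀ Π(I) w(s)`, and integrating over `[0, t]` and substituting `s ↦ t - s` gives
`F(t) ≼ exp(tA) X₀ exp(tAᵀ) + c ∫₀ᵗ exp(sA) Π(I) exp(sAᵀ) ds`.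
-/

section QuadraticForm

variable {ι : Type*} [Fintype ι]

theorem HasDerivAt.dotProduct_mulVec {F : ℝ → Matrix ι ι ℝ} {F' : Matrix ι ι ℝ}
    {v : ℝ → ι → ℝ} {v' : ι → ℝ} {t : ℝ}
    (hF : ∀ i j, HasDerivAt (fun s => F s i j) (F' i j) t) (hv : HasDerivAt v v' t) :
    HasDerivAt (fun s => v s ⬝ᵥ (F s *ᵥ v s))
      (v' ⬝ᵥ (F t *ᵥ v t) + v t ⬝ᵥ (F' *ᵥ v t) + v t ⬝ᵥ (F t *ᵥ v')) t := by
  have hv' := hasDerivAt_pi.1 hv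
  have h : HasDerivAt (fun s => ∑ a, v s a * ∑ b, F s a b * v s b)
      (∑ a, (v' a * ∑ b, F t a b * v t b +
        v t a * ∑ b, (F' a b * v t b + F t a b * v' b))) t :=
    HasDerivAt.fun_sum fun a _ => (hv' a).mul (HasDerivAt.fun_sum fun b _ => (hF a b).mul (hv' b))
  refine h.congr_deriv ?_
  simp only [dotProduct, mulVec, Finset.sum_add_distrib, mul_add, Finset.mul_sum]
  ring

theorem dotProduct_mul_mul_transpose_mulVec {m : Type*} [Fintype m] (B : Matrix m ι ℝ)
    (P : Matrix ι ι ℝ) (v : m → ℝ) :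
    v ⬝ᵥ ((B * P * Bᵀ) *ᵥ v) = (Bᵀ *ᵥ v) ⬝ᵥ (P *ᵥ (Bᵀ *ᵥ v)) := by
  rw [← mulVec_mulVec, ← mulVec_mulVec, dotProduct_mulVec, mulVec_transpose]

theorem dotProduct_mulVec_le_sum_abs_mul (X : Matrix ι ι ℝ) (v : ι → ℝ) :
    v ⬝ᵥ (X *ᵥ v) ≤ (∑ a, ∑ b, |X a b|) * (v ⬝ᵥ v) := by
  have hsq : ∀ a, v a ^ 2 ≤ v ⬝ᵥ v := fun a => by
    simpa [dotProduct, sq] using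
      Finset.single_le_sum (f := fun b => v b * v b) (fun b _ => mul_self_nonneg (v b))
        (Finset.mem_univ a)
  calc v ⬝ᵥ (X *ᵥ v) = ∑ a, ∑ b, v a * (X a b * v b) := by
        simp only [dotProduct, mulVec, Finset.mul_sum]
    _ ≤ ∑ a, ∑ b, |X a b| * (v ⬝ᵥ v) := by
        refine Finset.sum_le_sum fun a _ => Finset.sum_le_sum fun b _ => ?_
        have hab : |v a| * |v b| ≤ v ⬝ᵥ v := by
          nlinarith [two_mul_le_add_sq |v a| |v b|, sq_abs (v a), sq_abs (v b), hsq a, hsq b]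
        calc v a * (X a b * v b) ≤ |X a b| * (|v a| * |v b|) := by
              rw [← abs_mul, ← abs_mul, mul_left_comm]; exact le_abs_self _
          _ ≤ |X a b| * (v ⬝ᵥ v) := mul_le_mul_of_nonneg_left hab (abs_nonneg _)
    _ = (∑ a, ∑ b, |X a b|) * (v ⬝ᵥ v) := by simp only [Finset.sum_mul]

theorem posSemidef_sub_of_dotProduct_mulVec_le {X Y : Matrix ι ι ℝ} (hX : X.IsHermitian)
    (hY : Y.IsHermitian) (h : ∀ v, v ⬝ᵥ (X *ᵥ v) ≤ v ⬝ᵥ (Y *ᵥ v)) : (Y - X).PosSemidef :=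
  .of_dotProduct_mulVec_nonneg (hY.sub hX) fun v => by
    simpa [sub_mulVec, dotProduct_sub] using h v

theorem exists_nonneg_smul_one_sub_posSemidef [DecidableEq ι] {F : ℝ → Matrix ι ι ℝ}
    {S : Set ℝ} (hS : IsCompact S)
    (hF : ∀ i j, ContinuousOn (fun s => F s i j) S) (hherm : ∀ s ∈ S, (F s).IsHermitian) :
    ∃ c : ℝ, 0 ≤ c ∧ ∀ s ∈ S, (c • 1 - F s).PosSemidef := by
  obtain ⟨M, hM⟩ := hS.bddAbove_image (f := fun s => ∑ a, ∑ b, |F s a b|)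
    (continuousOn_finsetSum _ fun a _ => continuousOn_finsetSum _ fun b _ => (hF a b).abs)
  refine ⟨max M 0, le_max_right _ _, fun s hs => posSemidef_sub_of_dotProduct_mulVec_le
    (hherm s hs) (isHermitian_one.smul (IsSelfAdjoint.all _)) fun v => ?_⟩
  calc v ⬝ᵥ (F s *ᵥ v) ≤ (∑ a, ∑ b, |F s a b|) * (v ⬝ᵥ v) :=
        dotProduct_mulVec_le_sum_abs_mul _ _
    _ ≤ max M 0 * (v ⬝ᵥ v) := mul_le_mul_of_nonneg_right
        ((hM ⟨s, hs, rfl⟩).trans (le_max_left _ _)) (dotProduct_self_star_nonneg v)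
    _ = v ⬝ᵥ ((max M 0 • (1 : Matrix ι ι ℝ)) *ᵥ v) := by
        rw [smul_mulVec, one_mulVec, dotProduct_smul, smul_eq_mul]

end QuadraticForm

section MatrixExp

variable {ι : Type*} [Fintype ι] [DecidableEq ι]

theorem mexp_zero : mexp (0 : Matrix ι ι ℝ) = 1 :=
  NormedSpace.exp_zero

theorem transpose_mexp_smul (A : Matrix ι ι ℝ) (t : ℝ) : (mexp (t • A))ᵀ = mexp (t • Aᵀ) := by
  rw [mexp, mexp, ← Matrix.exp_transpose, transpose_smul]

-- `NormedSpace.exp` does not depend on the norm; the `L∞` operator norm is only there to make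
-- `Matrix ι ι ℝ` a normed algebra, and it induces the product topology.
theorem continuous_mexp_smul (A : Matrix ι ι ℝ) : Continuous fun s : ℝ => mexp (s • A) := by
  let _ : NormedRing (Matrix ι ι ℝ) := Matrix.linftyOpNormedRing
  let _ : NormedAlgebra ℝ (Matrix ι ι ℝ) := Matrix.linftyOpNormedAlgebra
  exact continuous_iff_continuousAt.2 fun t =>
    (hasDerivAt_exp_smul_const' (𝕂 := ℝ) A t).continuousAt

theorem hasDerivAt_mexp_smul_mulVec (A : Matrix ι ι ℝ) (x : ι → ℝ) (t : ℝ) :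
    HasDerivAt (fun s : ℝ => mexp (s • A) *ᵥ x) (A *ᵥ (mexp (t • A) *ᵥ x)) t := by
  let _ : NormedRing (Matrix ι ι ℝ) := Matrix.linftyOpNormedRing
  let _ : NormedAlgebra ℝ (Matrix ι ι ℝ) := Matrix.linftyOpNormedAlgebra
  let L : Matrix ι ι ℝ →ₗ[ℝ] ι → ℝ :=
    { toFun := fun M => M *ᵥ x, map_add' := fun _ _ => add_mulVec _ _ _,
      map_smul' := fun _ _ => smul_mulVec _ _ _ }
  rw [mulVec_mulVec]
  exact (LinearMap.toContinuousLinearMap L).hasFDerivAt.comp_hasDerivAt t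
    (hasDerivAt_exp_smul_const' (𝕂 := ℝ) A t)

theorem Matrix.PosSemidef.mexp_conj {X : Matrix ι ι ℝ} (hX : X.PosSemidef)
    (A : Matrix ι ι ℝ) (t : ℝ) :
    (mexp (t • A) * X * mexp (t • Aᵀ)).PosSemidef := by
  simpa [conjTranspose_eq_transpose_of_trivial, transpose_mexp_smul] using
    hX.mul_mul_conjTranspose_same (mexp (t • A))

theorem dotProduct_mexp_conj_mulVec (A X : Matrix ι ι ℝ) (t : ℝ) (y : ι → ℝ) :
    y ⬝ᵥ ((mexp (t • A) * X * mexp (t • Aᵀ)) *ᵥ y) =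
      (mexp (t • Aᵀ) *ᵥ y) ⬝ᵥ (X *ᵥ (mexp (t • Aᵀ) *ᵥ y)) := by
  rw [← transpose_mexp_smul, dotProduct_mul_mul_transpose_mulVec]

end MatrixExp

section MatrixIntegral

variable {n : ℕ}

theorem isHermitian_mInt {f : ℝ → Matrix (Fin n) (Fin n) ℝ} (hf : ∀ u, (f u).IsHermitian)
    (s t : ℝ) : (mInt s t f).IsHermitian := by
  ext i j
  simp only [conjTranspose_apply, star_trivial, mInt, of_apply]
  exact intervalIntegral.integral_congr fun u _ => congrFun (congrFun (hf u) i) j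

theorem dotProduct_mInt_mulVec {f : ℝ → Matrix (Fin n) (Fin n) ℝ} {s t : ℝ}
    (hf : ∀ i j, IntervalIntegrable (fun u => f u i j) volume s t) (v : Fin n → ℝ) :
    v ⬝ᵥ (mInt s t f *ᵥ v) = ∫ u in s..t, v ⬝ᵥ (f u *ᵥ v) := by
  simp only [dotProduct, mulVec, mInt, of_apply]
  have hrow : ∀ a, ∫ u in s..t, v a * ∑ b, f u a b * v b =
      v a * ∑ b, (∫ u in s..t, f u a b) * v b := fun a => by
    rw [intervalIntegral.integral_const_mul, intervalIntegral.integral_finsetSum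
      (f := fun b u => f u a b * v b) fun b _ => (hf a b).mul_const _]
    simp only [intervalIntegral.integral_mul_const]
  rw [intervalIntegral.integral_finsetSum (f := fun a u => v a * ∑ b, f u a b * v b)
    fun a _ => by
      simpa only [Finset.sum_apply] using
        (IntervalIntegrable.sum _ fun b _ => (hf a b).mul_const (v b)).const_mul (v a)]
  simp only [hrow]

end MatrixIntegral

section PiOp

variable {n q : ℕ}

theorem PiOp_sub (K : Matrix (Fin q) (Fin q) ℝ) (N : Fin q → Matrix (Fin n) (Fin n) ℝ)
    (X Y : Matrix (Fin n) (Fin n) ℝ) : PiOp K N (X - Y) = PiOp K N X - PiOp K N Y := by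
  simp only [PiOp, Matrix.mul_sub, Matrix.sub_mul, smul_sub, Finset.sum_sub_distrib]

theorem PiOp_smul (K : Matrix (Fin q) (Fin q) ℝ) (N : Fin q → Matrix (Fin n) (Fin n) ℝ)
    (c : ℝ) (X : Matrix (Fin n) (Fin n) ℝ) : PiOp K N (c • X) = c • PiOp K N X := by
  simp only [PiOp, Finset.smul_sum, Matrix.mul_smul, Matrix.smul_mul, smul_comm c]

theorem PiOp_conjTranspose_mul_self (C : Matrix (Fin q) (Fin q) ℝ)
    (N : Fin q → Matrix (Fin n) (Fin n) ℝ) (X : Matrix (Fin n) (Fin n) ℝ) :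
    PiOp (Cᴴ * C) N X = ∑ k, (∑ i, C k i • N i) * X * (∑ i, C k i • N i)ᴴ := by
  have hk : ∀ k, (∑ i, C k i • N i) * X * (∑ i, C k i • N i)ᴴ =
      ∑ i, ∑ j, (C k i * C k j) • (N i * X * (N j)ᵀ) := fun k => by
    simp only [conjTranspose_eq_transpose_of_trivial, transpose_sum, transpose_smul,
      Finset.sum_mul, Finset.mul_sum, smul_mul_assoc, mul_smul_comm, Finset.smul_sum, smul_smul]
    rw [Finset.sum_comm]
    exact Finset.sum_congr rfl fun i _ => Finset.sum_congr rfl fun j _ => by rw [mul_comm]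
  calc PiOp (Cᴴ * C) N X = ∑ i, ∑ j, ∑ k, (C k i * C k j) • (N i * X * (N j)ᵀ) := by
        simp only [PiOp, mul_apply, conjTranspose_apply, star_trivial, Finset.sum_smul]
    _ = ∑ k, ∑ i, ∑ j, (C k i * C k j) • (N i * X * (N j)ᵀ) := by
        conv_lhs => enter [2, i]; rw [Finset.sum_comm]
        rw [Finset.sum_comm]
    _ = _ := by simp only [hk]

open scoped MatrixOrder in
theorem Matrix.PosSemidef.PiOp {X : Matrix (Fin n) (Fin n) ℝ} (hX : X.PosSemidef)
    {K : Matrix (Fin q) (Fin q) ℝ} (hK : K.PosSemidef) (N : Fin q → Matrix (Fin n) (Fin n) ℝ) :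
    (PiOp K N X).PosSemidef := by
  obtain ⟨C, rfl⟩ := CStarAlgebra.nonneg_iff_eq_star_mul_self.mp hK.nonneg
  rw [star_eq_conjTranspose, PiOp_conjTranspose_mul_self]
  exact posSemidef_sum _ fun k _ => hX.mul_mul_conjTranspose_same _


theorem dotProduct_PiOp_le {K : Matrix (Fin q) (Fin q) ℝ} (hK : K.PosSemidef)
    (N : Fin q → Matrix (Fin n) (Fin n) ℝ) {X : Matrix (Fin n) (Fin n) ℝ} {c : ℝ}
    (hX : (c • 1 - X).PosSemidef) (v : Fin n → ℝ) :
    v ⬝ᵥ (PiOp K N X *ᵥ v) ≤ c * (v ⬝ᵥ (PiOp K N 1 *ᵥ v)) := by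
  have := (hX.PiOp hK N).dotProduct_mulVec_nonneg v
  rw [PiOp_sub, PiOp_smul, sub_mulVec, smul_mulVec, dotProduct_sub, dotProduct_smul,
    star_trivial, smul_eq_mul] at this
  linarith

end PiOp

section Comparison

open Set

theorem sub_le_integral_of_hasDerivAt_of_le {g g' φ : ℝ → ℝ} {a b : ℝ} (hab : a ≤ b)
    (hg : ∀ x ∈ Icc a b, HasDerivAt g (g' x) x) (hφ : IntegrableOn φ (Icc a b))
    (h : ∀ x ∈ Ioo a b, g' x ≤ φ x) : g b - g a ≤ ∫ x in a..b, φ x :=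
  intervalIntegral.sub_le_integral_of_hasDeriv_right_of_le hab
    (fun x hx => (hg x hx).continuousAt.continuousWithinAt)
    (fun x hx => (hg x (Ioo_subset_Icc_self hx)).hasDerivWithinAt) hφ h

theorem integral_le_sub_of_hasDerivAt_of_le {g g' φ : ℝ → ℝ} {a b : ℝ} (hab : a ≤ b)
    (hg : ∀ x ∈ Icc a b, HasDerivAt g (g' x) x) (hφ : IntegrableOn φ (Icc a b))
    (h : ∀ x ∈ Ioo a b, φ x ≤ g' x) : ∫ x in a..b, φ x ≤ g b - g a :=
  intervalIntegral.integral_le_sub_of_hasDeriv_right_of_le hab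
    (fun x hx => (hg x hx).continuousAt.continuousWithinAt)
    (fun x hx => (hg x (Ioo_subset_Icc_self hx)).hasDerivWithinAt) hφ h

end Comparison

section Solution

open Set

variable {n q : ℕ}

theorem dotProduct_LyapL_mulVec (A X : Matrix (Fin n) (Fin n) ℝ) (v : Fin n → ℝ) :
    v ⬝ᵥ (LyapL A X *ᵥ v) = (Aᵀ *ᵥ v) ⬝ᵥ (X *ᵥ v) + v ⬝ᵥ (X *ᵥ (Aᵀ *ᵥ v)) := by
  rw [LyapL, add_mulVec, dotProduct_add, ← mulVec_mulVec, ← mulVec_mulVec, dotProduct_mulVec,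
    mulVec_transpose]

theorem hasDerivAt_dotProduct_mexp_mulVec_of_lyapL {A P : Matrix (Fin n) (Fin n) ℝ}
    {F : ℝ → Matrix (Fin n) (Fin n) ℝ} {s : ℝ}
    (hF : ∀ i j, HasDerivAt (fun u => F u i j) ((LyapL A (F s) + P) i j) s)
    (t : ℝ) (y : Fin n → ℝ) :
    HasDerivAt (fun u => (mexp ((t - u) • Aᵀ) *ᵥ y) ⬝ᵥ (F u *ᵥ (mexp ((t - u) • Aᵀ) *ᵥ y)))
      ((mexp ((t - s) • Aᵀ) *ᵥ y) ⬝ᵥ (P *ᵥ (mexp ((t - s) • Aᵀ) *ᵥ y))) s := by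
  have hw : HasDerivAt (fun u => mexp ((t - u) • Aᵀ) *ᵥ y)
      (-(Aᵀ *ᵥ (mexp ((t - s) • Aᵀ) *ᵥ y))) s := by
    have := (hasDerivAt_mexp_smul_mulVec Aᵀ y (t - s)).scomp s ((hasDerivAt_id s).const_sub t)
    rw [neg_one_smul] at this
    exact this
  refine (HasDerivAt.dotProduct_mulVec hF hw).congr_deriv ?_
  rw [add_mulVec, dotProduct_add, dotProduct_LyapL_mulVec, neg_dotProduct, mulVec_neg,
    dotProduct_neg]
  ring

def IsSolutionOn (T : ℝ) (A : Matrix (Fin n) (Fin n) ℝ) (K : Matrix (Fin q) (Fin q) ℝ)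
    (N : Fin q → Matrix (Fin n) (Fin n) ℝ) (F : ℝ → Matrix (Fin n) (Fin n) ℝ) : Prop :=
  ∀ t ∈ Icc (0 : ℝ) T, ∀ i j,
    HasDerivAt (fun s => F s i j) ((LyapL A (F t) + PiOp K N (F t)) i j) t

variable {T : ℝ} {A : Matrix (Fin n) (Fin n) ℝ} {K : Matrix (Fin q) (Fin q) ℝ}
  {N : Fin q → Matrix (Fin n) (Fin n) ℝ} {F : ℝ → Matrix (Fin n) (Fin n) ℝ}

theorem dotProduct_mexp_initial_le_of_solution (hK : K.PosSemidef)
    (hF : IsSolutionOn T A K N F)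
    (hFpsd : ∀ t ∈ Icc (0 : ℝ) T, (F t).PosSemidef) {t : ℝ} (ht : t ∈ Icc 0 T)
    (y : Fin n → ℝ) :
    (mexp (t • Aᵀ) *ᵥ y) ⬝ᵥ (F 0 *ᵥ (mexp (t • Aᵀ) *ᵥ y)) ≤ y ⬝ᵥ (F t *ᵥ y) := by
  have hsub : Icc 0 t ⊆ Icc 0 T := Icc_subset_Icc_right ht.2
  have := integral_le_sub_of_hasDerivAt_of_le ht.1
    (fun s hs => hasDerivAt_dotProduct_mexp_mulVec_of_lyapL (hF s (hsub hs)) t y)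
    integrableOn_zero fun s hs =>
      ((hFpsd s (hsub (Ioo_subset_Icc_self hs))).PiOp hK N).dotProduct_mulVec_nonneg _
  simpa only [sub_self, sub_zero, zero_smul, mexp_zero, one_mulVec, Pi.zero_apply,
    intervalIntegral.integral_zero, sub_nonneg] using this

theorem dotProduct_le_mexp_initial_add_integral_of_solution (hK : K.PosSemidef)
    (hF : IsSolutionOn T A K N F)
    {c : ℝ} (hc : ∀ t ∈ Icc (0 : ℝ) T, (c • 1 - F t).PosSemidef) {t : ℝ} (ht : t ∈ Icc 0 T)
    (y : Fin n → ℝ) :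
    y ⬝ᵥ (F t *ᵥ y) ≤ (mexp (t • Aᵀ) *ᵥ y) ⬝ᵥ (F 0 *ᵥ (mexp (t • Aᵀ) *ᵥ y)) +
      c * ∫ u in (0 : ℝ)..t, (mexp (u • Aᵀ) *ᵥ y) ⬝ᵥ (PiOp K N 1 *ᵥ (mexp (u • Aᵀ) *ᵥ y)) := by
  have hsub : Icc 0 t ⊆ Icc 0 T := Icc_subset_Icc_right ht.2
  set w : ℝ → Fin n → ℝ := fun u => mexp (u • Aᵀ) *ᵥ y
  have hw : Continuous w := (continuous_mexp_smul Aᵀ).matrix_mulVec continuous_const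
  have := sub_le_integral_of_hasDerivAt_of_le ht.1
    (φ := fun s => c * (w (t - s) ⬝ᵥ (PiOp K N 1 *ᵥ w (t - s))))
    (fun s hs => hasDerivAt_dotProduct_mexp_mulVec_of_lyapL (hF s (hsub hs)) t y)
    (Continuous.integrableOn_Icc (by fun_prop))
    fun s hs => dotProduct_PiOp_le hK N (hc s (hsub (Ioo_subset_Icc_self hs))) _
  rw [intervalIntegral.integral_const_mul, intervalIntegral.integral_comp_sub_left
    (fun u => w u ⬝ᵥ (PiOp K N 1 *ᵥ w u))] at this
  simp only [sub_self, sub_zero, zero_smul, mexp_zero, one_mulVec] at this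
  linarith

theorem solution_lower_bound (hK : K.PosSemidef) (hF : IsSolutionOn T A K N F)
    (hFpsd : ∀ t ∈ Icc (0 : ℝ) T, (F t).PosSemidef) {t : ℝ} (ht : t ∈ Icc 0 T) :
    (F t - mexp (t • A) * F 0 * mexp (t • Aᵀ)).PosSemidef :=
  posSemidef_sub_of_dotProduct_mulVec_le
    ((hFpsd 0 ⟨le_rfl, ht.1.trans ht.2⟩).mexp_conj A t).isHermitian (hFpsd t ht).isHermitian
    fun y => by
      rw [dotProduct_mexp_conj_mulVec]
      exact dotProduct_mexp_initial_le_of_solution hK hF hFpsd ht y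

theorem solution_upper_bound (hK : K.PosSemidef) (hF : IsSolutionOn T A K N F)
    (hFpsd : ∀ t ∈ Icc (0 : ℝ) T, (F t).PosSemidef)
    {c : ℝ} (hc : ∀ t ∈ Icc (0 : ℝ) T, (c • 1 - F t).PosSemidef) {t : ℝ} (ht : t ∈ Icc 0 T) :
    (mexp (t • A) * F 0 * mexp (t • Aᵀ) +
      c • mInt 0 t (fun s => mexp (s • A) * PiOp K N 1 * mexp (s • Aᵀ)) - F t).PosSemidef := by
  have hP : (PiOp K N 1).PosSemidef := PosSemidef.one.PiOp hK N
  have hcont : Continuous fun s : ℝ => mexp (s • A) * PiOp K N 1 * mexp (s • Aᵀ) :=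
    ((continuous_mexp_smul A).matrix_mul continuous_const).matrix_mul (continuous_mexp_smul Aᵀ)
  refine posSemidef_sub_of_dotProduct_mulVec_le (hFpsd t ht).isHermitian
    (((hFpsd 0 ⟨le_rfl, ht.1.trans ht.2⟩).mexp_conj A t).isHermitian.add
      ((isHermitian_mInt (fun u => (hP.mexp_conj A u).isHermitian) 0 t).smul
        (IsSelfAdjoint.all c))) fun y => ?_
  rw [add_mulVec, dotProduct_add, smul_mulVec, dotProduct_smul, smul_eq_mul,
    dotProduct_mInt_mulVec fun i j => (hcont.matrix_elem i j).intervalIntegrable 0 t]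
  simp only [dotProduct_mexp_conj_mulVec]
  exact dotProduct_le_mexp_initial_add_integral_of_solution hK hF hc ht y

end Solution

theorem thm_4_1_nonneg_constants_general {n q : ℕ} (T : ℝ)
    (A : Matrix (Fin n) (Fin n) ℝ) (N : Fin q → Matrix (Fin n) (Fin n) ℝ)
    (K : Matrix (Fin q) (Fin q) ℝ) (hK : K.PosSemidef)
    (X₀ : Matrix (Fin n) (Fin n) ℝ)
    (F : ℝ → Matrix (Fin n) (Fin n) ℝ) (hF0 : F 0 = X₀)
    (hF : ∀ t ∈ Set.Icc (0:ℝ) T, ∀ i j,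
      HasDerivAt (fun s => F s i j) ((LyapL A (F t) + PiOp K N (F t)) i j) t)
    (hFpsd : ∀ t ∈ Set.Icc (0:ℝ) T, (F t).PosSemidef) :
    (∃ cLow cUp : ℝ, 0 ≤ cLow ∧ 0 ≤ cUp ∧ ∀ t ∈ Set.Icc (0:ℝ) T,
      (F t - (mexp (t • A) * X₀ * mexp (t • Aᵀ) +
        cLow • mInt 0 t (fun s => mexp (s • A) * PiOp K N 1 * mexp (s • Aᵀ)))).PosSemidef ∧
      ((mexp (t • A) * X₀ * mexp (t • Aᵀ) +
        cUp • mInt 0 t (fun s => mexp (s • A) * PiOp K N 1 * mexp (s • Aᵀ))) -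
          F t).PosSemidef) ∧
    ∀ t ∈ Set.Icc (0:ℝ) T,
      (F t - mexp (t • A) * X₀ * mexp (t • Aᵀ)).PosSemidef := by
  subst hF0
  obtain ⟨c, hc0, hc⟩ := exists_nonneg_smul_one_sub_posSemidef isCompact_Icc
    (fun i j s hs => (hF s hs i j).continuousAt.continuousWithinAt)
    fun s hs => (hFpsd s hs).isHermitian
  have lower := fun t (ht : t ∈ Set.Icc (0 : ℝ) T) => solution_lower_bound hK hF hFpsd ht
  refine ⟨⟨0, c, le_rfl, hc0, fun t ht => ⟨?_, solution_upper_bound hK hF hFpsd hc ht⟩⟩, lower⟩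
  simpa only [zero_smul, add_zero] using lower t ht

/-- **Refinement of Theorem 4.1.** If `K` and `X₀` are positive semidefinite, `F` solves
`F' = L_A(F) + Π(F)` on `[0,T]` with `F(0) = X₀`, and `F(t)` is positive semidefinite on
`[0,T]`, then the two-sided Loewner bound of Theorem 4.1 holds with nonnegative constants
`c_low, c_up ≥ 0`; in particular `F(t) ≽ exp(At) X₀ exp(Aᵀt)` for all `t ∈ [0,T]`. -/
theorem thm_4_1_nonneg_constants {n q : ℕ} (T : ℝ) (hT : 0 < T)
    (A : Matrix (Fin n) (Fin n) ℝ) (N : Fin q → Matrix (Fin n) (Fin n) ℝ)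
    (K : Matrix (Fin q) (Fin q) ℝ) (hK : K.PosSemidef)
    (X₀ : Matrix (Fin n) (Fin n) ℝ) (hX₀ : X₀.PosSemidef)
    (F : ℝ → Matrix (Fin n) (Fin n) ℝ) (hF0 : F 0 = X₀)
    (hF : ∀ t ∈ Set.Icc (0:ℝ) T, ∀ i j,
      HasDerivAt (fun s => F s i j) ((LyapL A (F t) + PiOp K N (F t)) i j) t)
    (hFpsd : ∀ t ∈ Set.Icc (0:ℝ) T, (F t).PosSemidef) :
    (∃ cLow cUp : ℝ, 0 ≤ cLow ∧ 0 ≤ cUp ∧ ∀ t ∈ Set.Icc (0:ℝ) T,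
      (F t - (mexp (t • A) * X₀ * mexp (t • Aᵀ) +
        cLow • mInt 0 t (fun s => mexp (s • A) * PiOp K N 1 * mexp (s • Aᵀ)))).PosSemidef ∧
      ((mexp (t • A) * X₀ * mexp (t • Aᵀ) +
        cUp • mInt 0 t (fun s => mexp (s • A) * PiOp K N 1 * mexp (s • Aᵀ))) -
          F t).PosSemidef) ∧
    ∀ t ∈ Set.Icc (0:ℝ) T,
      (F t - mexp (t • A) * X₀ * mexp (t • Aᵀ)).PosSemidef :=
  thm_4_1_nonneg_constants_general T A N K hK X₀ F hF0 hF hFpsd
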